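/- arXiv:math/0502472 — 2 statements merged into one kernel-verified Lean document; each statement's English description precedes it below -/
import Mathlib

section
/- For every integer l ≥ 1 there exists a natural number s such that ∏_{i=1}^{l} (9^l − 9^{i−1}) = 2^(ν₂(l!)+3l)·(2s+1); equivalently, the 2-adic valuation of ∏_{i=1}^{l} (9^l − 9^{i−1}) equals ν₂(l!) + 3l. -/
/-!
Shifting the index, the product is `∏_{k<l} (9^l - 9^k)`, and `9^l - 9^k = 9^k (9^(l-k) - 1)` with
`9^k` odd. Lifting the exponent for `9 = 3^2` gives `ν₂(9^m - 1) = ν₂(m) + 3`, so the valuation of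
the product is `∑_{m=1}^{l} (ν₂(m) + 3) = ν₂(l!) + 3l`.
-/

open Finset Nat

theorem padicValNat_finset_prod {ι : Type*} {p : ℕ} [Fact p.Prime] {s : Finset ι} {f : ι → ℕ}
    (hf : ∀ i ∈ s, f i ≠ 0) :
    padicValNat p (∏ i ∈ s, f i) = ∑ i ∈ s, padicValNat p (f i) := by
  simp only [← factorization_def _ Fact.out, factorization_prod hf, Finsupp.finsetSum_apply]

theorem padicValNat_factorial_eq_sum_range {p : ℕ} [Fact p.Prime] (n : ℕ) :
    padicValNat p n ! = ∑ i ∈ range n, padicValNat p (i + 1) := by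
  rw [factorial_eq_prod_range_add_one, padicValNat_finset_prod fun i _ ↦ succ_ne_zero i]

theorem exists_eq_two_pow_padicValNat_mul_odd {n : ℕ} (hn : n ≠ 0) :
    ∃ s, n = 2 ^ padicValNat 2 n * (2 * s + 1) := by
  obtain ⟨k, m, ⟨s, rfl⟩, rfl⟩ := exists_eq_two_pow_mul_odd hn
  refine ⟨s, ?_⟩
  rw [padicValNat.mul (by positivity) (by omega), padicValNat.prime_pow,
    padicValNat.eq_zero_of_not_dvd (by omega), add_zero]

theorem padicValNat_two_nine_pow_sub_one {k : ℕ} (hk : k ≠ 0) :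
    padicValNat 2 (9 ^ k - 1) = padicValNat 2 k + 3 := by
  have lte := padicValNat.pow_two_sub_one (x := 3) (n := 2 * k) (by norm_num) (by norm_num)
    (by omega) (even_two_mul k)
  rw [pow_mul, padicValNat.mul two_ne_zero hk] at lte
  norm_num [padicValNat.self] at lte
  have h4 : padicValNat 2 4 = 2 := padicValNat.prime_pow (p := 2) 2
  omega

theorem padicValNat_two_nine_pow_sub_nine_pow {k l : ℕ} (hkl : k < l) :
    padicValNat 2 (9 ^ l - 9 ^ k) = padicValNat 2 (l - k) + 3 := by
  have hsplit : 9 ^ l - 9 ^ k = 9 ^ k * (9 ^ (l - k) - 1) := by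
    rw [Nat.mul_sub, mul_one, ← pow_add, Nat.add_sub_of_le hkl.le]
  have hodd : ¬2 ∣ 9 ^ k := (Odd.pow (by decide : Odd 9)).not_two_dvd_nat
  rw [hsplit, padicValNat.mul (by positivity) (Nat.sub_ne_zero_of_lt (Nat.one_lt_pow (by omega)
    (by norm_num))), padicValNat.eq_zero_of_not_dvd hodd, zero_add,
    padicValNat_two_nine_pow_sub_one (by omega)]

theorem nine_pow_sub_nine_pow_ne_zero {k l : ℕ} (hkl : k < l) : 9 ^ l - 9 ^ k ≠ 0 :=
  Nat.sub_ne_zero_of_lt (Nat.pow_lt_pow_right (by norm_num) hkl)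

theorem padicValNat_two_prod_nine_pow_sub (l : ℕ) :
    padicValNat 2 (∏ k ∈ range l, (9 ^ l - 9 ^ k)) = padicValNat 2 l ! + 3 * l := by
  rw [padicValNat_finset_prod fun k hk ↦ nine_pow_sub_nine_pow_ne_zero (mem_range.1 hk),
    sum_congr rfl fun k hk ↦ padicValNat_two_nine_pow_sub_nine_pow (mem_range.1 hk),
    sum_add_distrib, sum_const, card_range, smul_eq_mul, mul_comm l 3,
    padicValNat_factorial_eq_sum_range, ← sum_range_reflect]
  refine congrArg (· + 3 * l) (sum_congr rfl fun k hk ↦ ?_)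
  have hkl := mem_range.1 hk
  congr 1
  omega

theorem prod_nine_pow_sub_general (l : ℕ) :
    ∃ s : ℕ, ∏ i ∈ Finset.Icc 1 l, (9 ^ l - 9 ^ (i - 1)) =
      2 ^ (padicValNat 2 (Nat.factorial l) + 3 * l) * (2 * s + 1) := by
  have hshift : ∏ i ∈ Icc 1 l, (9 ^ l - 9 ^ (i - 1)) = ∏ k ∈ range l, (9 ^ l - 9 ^ k) := by
    rw [← Ico_add_one_right_eq_Icc, prod_Ico_eq_prod_range, Nat.add_sub_cancel]
    simp only [Nat.add_sub_cancel_left]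
  rw [hshift, ← padicValNat_two_prod_nine_pow_sub]
  exact exists_eq_two_pow_padicValNat_mul_odd <|
    prod_ne_zero_iff.2 fun k hk ↦ nine_pow_sub_nine_pow_ne_zero (mem_range.1 hk)

theorem prod_nine_pow_sub (l : ℕ) (hl : 1 ≤ l) :
    ∃ s : ℕ, ∏ i ∈ Finset.Icc 1 l, (9 ^ l - 9 ^ (i - 1)) =
      2 ^ (padicValNat 2 (Nat.factorial l) + 3 * l) * (2 * s + 1) :=
  prod_nine_pow_sub_general l
end

section
/- Let C : ℕ → ℕ → ℤ₂ be any infinite upper triangular matrix with C i i = 9^i and C i (i+1) = 1 for all i ≥ 0 (and C i j = 0 for j < i, with the entries C i j for j ≥ i+2 arbitrary). Then there exists an infinite upper triangular matrix U : ℕ → ℕ → ℤ₂ with every diagonal entry U i i a 2-adic unit such that U·B = C·U, i.e. for all i ≤ j, ∑_{k ∈ Finset.Icc i j} (U i k)·(B k j) = ∑_{k ∈ Finset.Icc i j} (C i k)·(U k j). (Equivalently, U is invertible in the ring of infinite upper triangular matrices over ℤ₂ and U⁻¹·C·U = B.) -/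
/-!
Write `d i` for the diagonal entries, which all have the same residue modulo the maximal
ideal (for `9 ^ i` over `ℤ_[2]` that residue is `1`). The columns `u j` of `U` are built one at a
time: `U · B = C · U` says exactly `(C - d (j + 1)) u (j + 1) = u j` on the rows `i ≤ j`. Setting
`u (j + 1) 0 = 0`, the unknowns `u (j + 1) 1, …, u (j + 1) (j + 1)` form a square system whose
matrix is upper triangular modulo the maximal ideal with the units `C i (i + 1)` on its diagonal,
so it is solvable over the local ring. Reading off row `j` gives
`C j (j + 1) * u (j + 1) (j + 1) = u j j + (d (j + 1) - d j) * u j j`, a unit.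
-/

/-- B : the infinite upper triangular matrix with B i i = 9^i, B i (i+1) = 1,
and all other entries 0. -/
noncomputable def Bmat : ℕ → ℕ → ℤ_[2] := fun i j =>
  if j = i then 9 ^ i else if j = i + 1 then 1 else 0

open Finset IsLocalRing

def bidiag {R : Type*} [Zero R] [One R] (d : ℕ → R) : ℕ → ℕ → R := fun i j =>
  if j = i then d i else if j = i + 1 then 1 else 0

section

variable {R : Type*} [CommRing R]

theorem sum_Icc_mul_bidiag_succ (v d : ℕ → R) {i j : ℕ} (hij : i ≤ j) :
    ∑ k ∈ Icc i (j + 1), v k * bidiag d k (j + 1) = v (j + 1) * d (j + 1) + v j := by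
  rw [sum_Icc_succ_top (by omega), add_comm, sum_eq_single_of_mem j (by simp [hij])]
  · simp [bidiag]
  · intro k hk hkj
    simp only [mem_Icc] at hk
    simp [bidiag, show j + 1 ≠ k by omega, show j ≠ k by omega]

theorem sum_Icc_eq_sum_range {f : ℕ → R} {i : ℕ} (hf : ∀ k < i, f k = 0) (n : ℕ) :
    ∑ k ∈ Icc i n, f k = ∑ k ∈ range (n + 1), f k := by
  refine sum_subset (fun k => by simp) fun k hk hk' => hf k ?_
  simp only [mem_range, mem_Icc] at hk hk'
  omega

variable [IsLocalRing R]

theorem isUnit_add_of_mem_maximalIdeal {a b : R} (ha : IsUnit a) (hb : b ∈ maximalIdeal R) :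
    IsUnit (a + b) := by
  rw [← residue_ne_zero_iff_isUnit, map_add, (residue_eq_zero_iff b).2 hb, add_zero]
  exact (residue_ne_zero_iff_isUnit a).2 ha

theorem isUnit_det_of_lt_mem_maximalIdeal {ι : Type*} [Fintype ι] [LinearOrder ι]
    (M : Matrix ι ι R) (hlow : ∀ i k, k < i → M i k ∈ maximalIdeal R)
    (hdiag : ∀ i, IsUnit (M i i)) : IsUnit M.det := by
  rw [← residue_ne_zero_iff_isUnit, RingHom.map_det, Matrix.det_of_isUpperTriangular]
  · exact prod_ne_zero_iff.2 fun i _ => (residue_ne_zero_iff_isUnit _).2 (hdiag i)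
  · exact fun i k hki => (residue_eq_zero_iff _).2 (hlow i k hki)

theorem exists_solution_of_isUnit_superdiag (A : ℕ → ℕ → R)
    (hA_low : ∀ i k, k ≤ i → A i k ∈ maximalIdeal R) (hA_super : ∀ i, IsUnit (A i (i + 1)))
    (n : ℕ) (t : ℕ → R) :
    ∃ w : ℕ → R, (∀ k, n < k → w k = 0) ∧
      ∀ i < n, ∑ k ∈ range (n + 1), A i k * w k = t i := by
  set N : Matrix (Fin n) (Fin n) R := Matrix.of fun i k => A i (k + 1)
  have hN : IsUnit N := N.isUnit_iff_isUnit_det.2 <|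
    isUnit_det_of_lt_mem_maximalIdeal N (fun i k hki => hA_low _ _ hki) fun i => hA_super i
  obtain ⟨x, hx⟩ := Matrix.mulVec_surjective_iff_isUnit.2 hN fun i => t i
  refine ⟨fun k => if h : 0 < k ∧ k ≤ n then x ⟨k - 1, by omega⟩ else 0,
    fun k hk => dif_neg (by omega), fun i hi => ?_⟩
  rw [sum_range_succ', ← congrFun hx ⟨i, hi⟩, Matrix.mulVec, dotProduct,
    ← Fin.sum_univ_eq_sum_range]
  simp [N]

variable (C : ℕ → ℕ → R) (d : ℕ → R)
  (hC_tri : ∀ i j, j < i → C i j = 0) (hC_diag : ∀ i, C i i = d i)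
  (hC_super : ∀ i, IsUnit (C i (i + 1))) (hd : ∀ i j, d i - d j ∈ maximalIdeal R)
include hC_tri hC_diag hC_super hd

theorem exists_next_column (j : ℕ) (t : ℕ → R) (ht : IsUnit (t j)) :
    ∃ w : ℕ → R, (∀ k, j + 1 < k → w k = 0) ∧ IsUnit (w (j + 1)) ∧
      ∀ i ≤ j, ∑ k ∈ Icc i (j + 1), C i k * w k = d (j + 1) * w i + t i := by
  set A : ℕ → ℕ → R := fun i k => C i k - if k = i then d (j + 1) else 0
  have hA_low : ∀ i k, k ≤ i → A i k ∈ maximalIdeal R := by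
    intro i k hki
    rcases hki.lt_or_eq with hki | rfl
    · simp [A, hC_tri i k hki, hki.ne]
    · simpa [A, hC_diag] using hd _ _
  obtain ⟨w, hw_supp, hw⟩ := exists_solution_of_isUnit_superdiag A hA_low
    (fun i => by simpa [A] using hC_super i) (j + 1) t
  have hcol : ∀ i ≤ j, ∑ k ∈ Icc i (j + 1), C i k * w k = d (j + 1) * w i + t i := by
    intro i hi
    have := hw i (by omega)
    simp only [A, sub_mul, sum_sub_distrib, ite_mul, zero_mul, sum_ite_eq', mem_range,
      show i < j + 1 + 1 by omega, if_true] at this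
    rw [sum_Icc_eq_sum_range (fun k hk => by rw [hC_tri i k hk, zero_mul])]
    linear_combination this
  refine ⟨w, hw_supp, ?_, hcol⟩
  have hrow : C j (j + 1) * w (j + 1) = t j + (d (j + 1) - d j) * w j := by
    have := hcol j le_rfl
    rw [sum_Icc_succ_top (by omega), Icc_self, sum_singleton, hC_diag] at this
    linear_combination this
  exact isUnit_of_mul_isUnit_right <|
    hrow ▸ isUnit_add_of_mem_maximalIdeal ht (Ideal.mul_mem_right _ _ (hd _ _))

theorem exists_conj_bidiag :
    ∃ U : ℕ → ℕ → R, (∀ i j, j < i → U i j = 0) ∧ (∀ i, IsUnit (U i i)) ∧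
      ∀ i j, i ≤ j →
        ∑ k ∈ Icc i j, U i k * bidiag d k j = ∑ k ∈ Icc i j, C i k * U k j := by
  choose! next hnext_supp hnext_unit hnext_eq using
    exists_next_column C d hC_tri hC_diag hC_super hd
  let u : ℕ → ℕ → R := fun j => Nat.rec (Pi.single 0 1) (fun j w => next j w) j
  have hu_succ : ∀ j, u (j + 1) = next j (u j) := fun j => rfl
  have hu : ∀ j, (∀ i, j < i → u j i = 0) ∧ IsUnit (u j j) := by
    intro j
    induction j with
    | zero => exact ⟨fun i hi => Pi.single_eq_of_ne hi.ne' _, by simp [u]⟩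
    | succ j ih => exact hu_succ j ▸ ⟨hnext_supp j _ ih.2, hnext_unit j _ ih.2⟩
  refine ⟨fun i j => u j i, fun i j hji => (hu j).1 i hji, fun i => (hu i).2, fun i j hij => ?_⟩
  beta_reduce
  rcases hij.lt_or_eq with hij | rfl
  · obtain ⟨j, rfl⟩ := Nat.exists_eq_add_one_of_ne_zero (by omega : j ≠ 0)
    rw [sum_Icc_mul_bidiag_succ (u · i) _ (by omega), hu_succ,
      hnext_eq j _ (hu j).2 i (by omega)]
    ring
  · simp [bidiag, hC_diag, mul_comm]

end

theorem nine_pow_sub_nine_pow_mem_maximalIdeal (i j : ℕ) :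
    (9 : ℤ_[2]) ^ i - 9 ^ j ∈ maximalIdeal ℤ_[2] := by
  rw [← PadicInt.ker_toZMod, RingHom.mem_ker, map_sub, map_pow, map_pow, map_ofNat]
  simp [show (9 : ZMod 2) = 1 by decide]

theorem conj_to_B (C : ℕ → ℕ → ℤ_[2])
    (hC_tri : ∀ i j, j < i → C i j = 0)
    (hC_diag : ∀ i, C i i = 9 ^ i)
    (hC_super : ∀ i, C i (i + 1) = 1) :
    ∃ U : ℕ → ℕ → ℤ_[2],
      (∀ i j, j < i → U i j = 0) ∧
      (∀ i, IsUnit (U i i)) ∧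
      (∀ i j, i ≤ j →
        ∑ k ∈ Finset.Icc i j, U i k * Bmat k j = ∑ k ∈ Finset.Icc i j, C i k * U k j) :=
  exists_conj_bidiag C (9 ^ ·) hC_tri hC_diag (fun i => hC_super i ▸ isUnit_one)
    nine_pow_sub_nine_pow_mem_maximalIdeal
end
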